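/- arXiv:2601.21315 — 2 statements merged into one kernel-verified Lean document; each statement's English description precedes it below -/
import Mathlib

section
/- Fix β ∈ Δ_{K−1} and ε₁ ≥ 0. Let P̂ be a probability measure on 𝒳 and let γ be a probability measure on 𝒳 × 𝒳 whose second marginal is P̂ and which satisfies ‖z(a) − z(b)‖ ≤ ε₁ for γ-almost every pair (a,b); write Q for the first marginal of γ (so Q is a target covariate distribution within infinite-order Wasserstein distance ε₁ of P̂ with respect to the feature cost c(x,x') = ‖z(x) − z(x')‖). Assume the functions x ↦ L_β(z(x)) and S_β : b ↦ ⨆_{e ∈ closedBall(z(b), ε₁)} L_β(e) (supremum taken in [0,∞]) are measurable. Then the mixture-conditional target risk is dominated by the adversarial feature-perturbation surrogate: ∫⁻ L_β(z(x)) dQ(x) ≤ ∫⁻ S_β(b) dP̂(b), where both sides are Lebesgue integrals of nonnegative extended-real-valued functions. -/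
open MeasureTheory Metric ENNReal

/-- Fix `β ∈ Δ_{K−1}` and `ε₁ ≥ 0`.  Let `P̂` be a probability measure on `𝒳`
and `γ` a probability measure on `𝒳 × 𝒳` whose second marginal is `P̂` and
which satisfies `‖z a − z b‖ ≤ ε₁` for `γ`-a.e. pair `(a, b)`; write `Q` for
the first marginal of `γ` (so `Q` is within infinite-order Wasserstein
distance `ε₁` of `P̂` for the feature cost `c(x,x') = ‖z x − z x'‖`).
Assuming the functions `x ↦ L_β (z x)` and
`S_β : b ↦ ⨆ e ∈ closedBall (z b) ε₁, L_β e` are measurable, the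
mixture-conditional target risk is dominated by the adversarial
feature-perturbation surrogate: `∫⁻ L_β (z x) ∂Q ≤ ∫⁻ S_β ∂P̂`.
Here `L_β e = −∑ y, (∑ k, β k * q k e y) * log (π e y)` is the soft
pseudo-label cross-entropy loss (nonnegative since `0 < π ≤ 1`), lifted to
`[0,∞]` via `ENNReal.ofReal`. -/
theorem risk_le_adversarial_surrogate
    {𝒳 : Type*} [MeasurableSpace 𝒳]
    {E : Type*} [NormedAddCommGroup E] [NormedSpace ℝ E] [MeasurableSpace E]
    {𝒴 : Type*} [Fintype 𝒴] [Nonempty 𝒴] {K : ℕ} (hK : 1 ≤ K)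
    (z : 𝒳 → E) (hz : Measurable z)
    (q : Fin K → E → 𝒴 → ℝ)
    (hq0 : ∀ k e y, 0 ≤ q k e y) (hq1 : ∀ k e, ∑ y, q k e y = 1)
    (π : E → 𝒴 → ℝ) (hπ0 : ∀ e y, 0 < π e y) (hπ1 : ∀ e y, π e y ≤ 1)
    (β : Fin K → ℝ) (hβ0 : ∀ k, 0 ≤ β k) (hβ1 : ∑ k, β k = 1)
    (ε₁ : ℝ) (hε₁ : 0 ≤ ε₁)
    (L : E → ℝ≥0∞)
    (hL : L = fun e =>
      ENNReal.ofReal (-∑ y, (∑ k, β k * q k e y) * Real.log (π e y)))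
    (S : 𝒳 → ℝ≥0∞)
    (hS : S = fun b => ⨆ e ∈ closedBall (z b) ε₁, L e)
    (Phat : Measure 𝒳) [IsProbabilityMeasure Phat]
    (γ : Measure (𝒳 × 𝒳)) [IsProbabilityMeasure γ]
    (hsnd : γ.map Prod.snd = Phat)
    (hdist : ∀ᵐ ab ∂γ, ‖z ab.1 - z ab.2‖ ≤ ε₁)
    (Q : Measure 𝒳) (hQ : Q = γ.map Prod.fst)
    (hLm : Measurable fun x => L (z x))
    (hSm : Measurable S) :
    ∫⁻ x, L (z x) ∂Q ≤ ∫⁻ b, S b ∂Phat := by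
  subst hQ
  rw [← hsnd]
  rw [MeasureTheory.lintegral_map hLm measurable_fst,
      MeasureTheory.lintegral_map hSm measurable_snd]
  refine lintegral_mono_ae ?_
  filter_upwards [hdist] with ab hab
  rw [hS]
  have hmem : z ab.1 ∈ closedBall (z ab.2) ε₁ := by
    rw [mem_closedBall, dist_eq_norm]; exact hab
  exact le_biSup L hmem
end

section
/- (Coupling transfer inequality; the upper-bound direction of the W∞ duality of Staib–Jegelka, Lemma 3.1 of the appendix, as used in the proof of Proposition 1.) Let X be a pseudometric space equipped with its Borel σ-algebra, let P and Q be probability measures on X, and let ε ≥ 0. Suppose γ is a probability measure on X × X whose first marginal is Q and whose second marginal is P, and which satisfies dist(a, b) ≤ ε for γ-almost every pair (a, b). Let f : X → [0,∞] be measurable and define F : X → [0,∞] by F(x) := ⨆_{x' ∈ closedBall(x, ε)} f(x'). If F is measurable, then ∫⁻ f dQ ≤ ∫⁻ F dP. -/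
open MeasureTheory Metric ENNReal

/-- **Coupling transfer inequality** (the upper-bound direction of the `W∞`
duality of Staib–Jegelka, Lemma 3.1 of the appendix).  Let `X` be a
pseudometric space with its Borel σ-algebra, `P` and `Q` probability measures
on `X`, and `ε ≥ 0`.  If `γ` is a coupling of `Q` and `P` (first marginal `Q`,
second marginal `P`) with `dist a b ≤ ε` for `γ`-almost every pair `(a, b)`,
`f : X → [0,∞]` is measurable, and `F x = ⨆ x' ∈ closedBall x ε, f x'` is
measurable, then `∫⁻ f ∂Q ≤ ∫⁻ F ∂P`. -/
theorem coupling_transfer_inequality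
    {X : Type*} [PseudoMetricSpace X] [MeasurableSpace X] [BorelSpace X]
    (P Q : Measure X) [IsProbabilityMeasure P] [IsProbabilityMeasure Q]
    (ε : ℝ) (hε : 0 ≤ ε)
    (γ : Measure (X × X)) [IsProbabilityMeasure γ]
    (hfst : γ.map Prod.fst = Q) (hsnd : γ.map Prod.snd = P)
    (hdist : ∀ᵐ ab ∂γ, dist ab.1 ab.2 ≤ ε)
    (f : X → ℝ≥0∞) (hf : Measurable f)
    (F : X → ℝ≥0∞) (hF : F = fun x => ⨆ x' ∈ closedBall x ε, f x')
    (hFm : Measurable F) :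
    ∫⁻ x, f x ∂Q ≤ ∫⁻ x, F x ∂P := by
  have h1 : ∫⁻ x, f x ∂Q = ∫⁻ ab, f ab.1 ∂γ := by
    rw [← hfst, lintegral_map hf measurable_fst]
  have h2 : ∫⁻ x, F x ∂P = ∫⁻ ab, F ab.2 ∂γ := by
    rw [← hsnd, lintegral_map hFm measurable_snd]
  rw [h1, h2]
  refine lintegral_mono_ae ?_
  filter_upwards [hdist] with ab hab
  rw [hF]
  exact le_biSup f (mem_closedBall.mpr hab)
end
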